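/- arXiv:1206.0964 — 9 statements merged into one kernel-verified Lean document; each statement's English description precedes it below -/
import Mathlib

section
/- Let n ≥ 1. The group of pseudo-unitary matrices of the form 𝕁 acts transitively on n-dimensional isotropic subspaces: for any two complex subspaces V and V' of ℂ^(2n+1), each of complex dimension n and each 𝕁-isotropic, there exists a matrix g ∈ Matrix (Fin n ⊕ Fin 1 ⊕ Fin n) (Fin n ⊕ Fin 1 ⊕ Fin n) ℂ with gᴴ 𝕁 g = 𝕁 and det g = 1 such that the image of V under the linear map x ↦ g *ᵥ x equals V'. -/
open Matrix

noncomputable section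

abbrev Idx (n : ℕ) := Fin n ⊕ Fin 1 ⊕ Fin n

def Jmat (n : ℕ) : Matrix (Idx n) (Idx n) ℂ :=
  Matrix.of fun i j =>
    match i, j with
    | Sum.inl a, Sum.inr (Sum.inr b) => if a = b then 1 else 0
    | Sum.inr (Sum.inr a), Sum.inl b => if a = b then 1 else 0
    | Sum.inr (Sum.inl _), Sum.inr (Sum.inl _) => 1
    | _, _ => 0

def hform {n : ℕ} (x y : Idx n → ℂ) : ℂ := star x ⬝ᵥ (Jmat n *ᵥ y)

def IsIsotropic {n : ℕ} (V : Submodule ℂ (Idx n → ℂ)) : Prop :=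
  ∀ x ∈ V, ∀ y ∈ V, hform x y = 0

/-!
Every `n`-dimensional isotropic subspace `V` is the image of the standard one, spanned by the
first block of coordinates, under some `g` with `gᴴ 𝕁 g = 𝕁` and `det g = 1`; then `g' g⁻¹`
carries `V` to `V'`. To build `g`, let the columns of `A` be a basis of `V`, choose `W` with
`Aᴴ 𝕁 W = 1` (made isotropic by subtracting `A (Wᴴ 𝕁 W) / 2`) and a nonzero `u` that is
`𝕁`-orthogonal to the columns of `A` and `W`. The frame `[A | u | W]` has Gram matrix
`𝕁 · diag(1, h(u,u), 1)`, so comparing determinants gives `h(u,u) = |det [A | u | W]|²`,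
and dividing `u` by that determinant yields the required `g`.
-/

section ConjTranspose

variable {ι R : Type*} [Fintype ι] [CommRing R] [StarRing R]

theorem conjTranspose_conjTranspose_mul_mul {k l : Type*} {J : Matrix ι ι R} (hJ : Jᴴ = J)
    (X : Matrix ι k R) (Y : Matrix ι l R) : (Xᴴ * J * Y)ᴴ = Yᴴ * J * X := by
  rw [conjTranspose_mul, conjTranspose_mul, conjTranspose_conjTranspose, hJ, Matrix.mul_assoc]

theorem conjTranspose_mul_mul_mul_eq (J a b : Matrix ι ι R) :
    (a * b)ᴴ * J * (a * b) = bᴴ * (aᴴ * J * a) * b := by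
  simp only [conjTranspose_mul, Matrix.mul_assoc]

variable {J a b : Matrix ι ι R}

theorem conjTranspose_mul_mul_mul_eq_self (ha : aᴴ * J * a = J) (hb : bᴴ * J * b = J) :
    (a * b)ᴴ * J * (a * b) = J := by
  rw [conjTranspose_mul_mul_mul_eq, ha, hb]

theorem conjTranspose_nonsing_inv_mul_mul_eq_self [DecidableEq ι] (ha : aᴴ * J * a = J)
    (hdet : IsUnit a.det) : (a⁻¹)ᴴ * J * a⁻¹ = J :=
  calc (a⁻¹)ᴴ * J * a⁻¹ = (a⁻¹)ᴴ * (aᴴ * J * a) * a⁻¹ := by rw [ha]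
    _ = (a * a⁻¹)ᴴ * J * (a * a⁻¹) := (conjTranspose_mul_mul_mul_eq J a a⁻¹).symm
    _ = J := by rw [mul_nonsing_inv _ hdet, conjTranspose_one, Matrix.one_mul, Matrix.mul_one]

end ConjTranspose

section LinearAlgebra

variable {K m ι : Type*} [Field K] [Fintype m] [Fintype ι]

theorem exists_ne_zero_mulVec_eq_zero (B : Matrix m ι K) (h : Fintype.card m < Fintype.card ι) :
    ∃ u ≠ 0, B *ᵥ u = 0 := by
  obtain ⟨u, hu, hu0⟩ := Submodule.exists_mem_ne_zero_of_ne_bot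
    (LinearMap.ker_ne_bot_of_finrank_lt (f := B.mulVecLin) (by simpa using h))
  exact ⟨u, hu0, hu⟩

theorem exists_mulVec_injective_range_eq [DecidableEq m] (V : Submodule K (m → K)) {k : ℕ}
    (hV : Module.finrank K V = k) :
    ∃ A : Matrix m (Fin k) K,
      Function.Injective A.mulVec ∧ LinearMap.range A.mulVecLin = V := by
  let b := Module.finBasisOfFinrankEq K V hV
  refine ⟨LinearMap.toMatrix' (V.subtype ∘ₗ b.equivFun.symm.toLinearMap), ?_, ?_⟩
  · rw [← Matrix.coe_mulVecLin, ← Matrix.toLin'_apply', Matrix.toLin'_toMatrix']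
    exact V.injective_subtype.comp b.equivFun.symm.injective
  · rw [← Matrix.toLin'_apply', Matrix.toLin'_toMatrix', LinearMap.range_comp,
      LinearEquiv.range, Submodule.map_top, Submodule.range_subtype]

end LinearAlgebra

section Hyperbolic

open scoped ComplexOrder

theorem exists_conjTranspose_mul_mul_eq_one {𝕜 m k : Type*} [RCLike 𝕜] [Fintype m]
    [DecidableEq m] [Fintype k] [DecidableEq k] {J : Matrix m m 𝕜} {A : Matrix m k 𝕜}
    (hJ : IsUnit J) (hA : Function.Injective A.mulVec) :
    ∃ W : Matrix m k 𝕜, Aᴴ * J * W = 1 := by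
  have hAA : IsUnit (Aᴴ * A).det :=
    (isUnit_iff_isUnit_det _).mp (PosDef.conjTranspose_mul_self A hA).isUnit
  refine ⟨J⁻¹ * A * (Aᴴ * A)⁻¹, ?_⟩
  rw [show Aᴴ * J * (J⁻¹ * A * (Aᴴ * A)⁻¹) = Aᴴ * (J * J⁻¹) * A * (Aᴴ * A)⁻¹ by
    simp only [Matrix.mul_assoc], mul_nonsing_inv _ ((isUnit_iff_isUnit_det J).mp hJ),
    Matrix.mul_one, mul_nonsing_inv _ hAA]

theorem exists_isotropic_of_conjTranspose_mul_mul_eq_one {K m k : Type*} [Field K]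
    [StarRing K] [NeZero (2 : K)] [Fintype m] [Fintype k] [DecidableEq k] {J : Matrix m m K}
    {A W : Matrix m k K}
    (hJ : Jᴴ = J) (hAA : Aᴴ * J * A = 0) (hAW : Aᴴ * J * W = 1) :
    ∃ W' : Matrix m k K, Aᴴ * J * W' = 1 ∧ W'ᴴ * J * W' = 0 := by
  set M := Wᴴ * J * W with hM
  have hMh : Mᴴ = M := conjTranspose_conjTranspose_mul_mul hJ W W
  have hWA : Wᴴ * J * A = 1 := by
    rw [← conjTranspose_conjTranspose_mul_mul hJ, hAW, conjTranspose_one]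
  have hXAW (X : Matrix k k K) : X * Aᴴ * J * W = X := by
    rw [Matrix.mul_assoc, Matrix.mul_assoc, ← Matrix.mul_assoc Aᴴ, hAW, Matrix.mul_one]
  have hXAA (X : Matrix k k K) : X * Aᴴ * J * A = 0 := by
    rw [Matrix.mul_assoc, Matrix.mul_assoc, ← Matrix.mul_assoc Aᴴ, hAA, Matrix.mul_zero]
  refine ⟨W - (2 : K)⁻¹ • (A * M), ?_, ?_⟩
  · simp only [Matrix.mul_sub, Matrix.mul_smul, ← Matrix.mul_assoc, hAW, hAA, Matrix.zero_mul,
      smul_zero, sub_zero]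
  · simp only [conjTranspose_sub, conjTranspose_smul, conjTranspose_mul, hMh, star_inv₀,
      star_ofNat, Matrix.sub_mul, Matrix.mul_sub, Matrix.smul_mul, Matrix.mul_smul,
      ← Matrix.mul_assoc, hWA, hXAW, hXAA, Matrix.one_mul, smul_zero, sub_zero, ← hM]
    match_scalars
    linear_combination -inv_mul_cancel₀ (two_ne_zero (α := K))

end Hyperbolic

section Jmat

variable {n : ℕ}

theorem Jmat_conjTranspose : (Jmat n)ᴴ = Jmat n := by
  ext (a | a | a) (b | b | b) <;> simp [Jmat, conjTranspose_apply, eq_comm]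

theorem Jmat_mul_self : Jmat n * Jmat n = 1 := by
  ext i j
  rcases i with a | a | a <;> rcases j with b | b | b <;>
    simp [Jmat, mul_apply, one_apply, Fintype.sum_sum_type]
  rw [Subsingleton.elim a b]

theorem isUnit_Jmat : IsUnit (Jmat n) := IsUnit.of_mul_eq_one_right _ Jmat_mul_self

theorem isUnit_det_Jmat : IsUnit (Jmat n).det := (isUnit_iff_isUnit_det _).mp isUnit_Jmat

theorem conjTranspose_mul_Jmat_mul_apply {k : Type*} (A B : Matrix (Idx n) k ℂ)
    (i j : k) : (Aᴴ * Jmat n * B) i j = hform (A.col i) (B.col j) := by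
  simp only [hform, mul_apply, dotProduct, mulVec, col_apply, conjTranspose_apply, Pi.star_apply,
    Finset.mul_sum, Finset.sum_mul, mul_assoc]
  exact Finset.sum_comm

theorem IsIsotropic.conjTranspose_mul_Jmat_mul_eq_zero {V : Submodule ℂ (Idx n → ℂ)}
    (hV : IsIsotropic V) {k : Type*} [Fintype k] [DecidableEq k] {A : Matrix (Idx n) k ℂ}
    (hA : LinearMap.range A.mulVecLin ≤ V) : Aᴴ * Jmat n * A = 0 := by
  have hcol (i : k) : A.col i ∈ V := hA ⟨Pi.single i 1, mulVec_single_one A i⟩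
  ext i j
  exact (conjTranspose_mul_Jmat_mul_apply A A i j).trans (hV _ (hcol i) _ (hcol j))

end Jmat

section Frame

variable {n : ℕ}

def midScale (n : ℕ) (c : ℂ) : Matrix (Idx n) (Idx n) ℂ :=
  diagonal (Sum.elim 1 (Sum.elim (fun _ => c) 1))

theorem det_midScale (c : ℂ) : (midScale n c).det = c := by
  simp [midScale, det_diagonal, Fintype.prod_sum_type]

theorem midScale_one : midScale n 1 = 1 := by
  rw [midScale, ← diagonal_one]
  congr
  ext (_ | _ | _) <;> rfl

theorem conjTranspose_midScale_mul_Jmat_mul (a b : ℂ) :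
    (midScale n a)ᴴ * (Jmat n * midScale n b) * midScale n a =
      Jmat n * midScale n (star a * b * a) := by
  ext (i | i | i) (j | j | j) <;> simp [midScale, Jmat, diagonal_conjTranspose, mul_comm]

def frame (A W : Matrix (Idx n) (Fin n) ℂ) (u : Idx n → ℂ) : Matrix (Idx n) (Idx n) ℂ :=
  fromCols A (fromCols (replicateCol (Fin 1) u) W)

variable {A W : Matrix (Idx n) (Fin n) ℂ} {u : Idx n → ℂ}

theorem conjTranspose_frame_mul_Jmat_mul_frame (hAA : Aᴴ * Jmat n * A = 0)
    (hAW : Aᴴ * Jmat n * W = 1) (hWW : Wᴴ * Jmat n * W = 0) (hAu : (Aᴴ * Jmat n) *ᵥ u = 0)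
    (hWu : (Wᴴ * Jmat n) *ᵥ u = 0) :
    (frame A W u)ᴴ * Jmat n * frame A W u = Jmat n * midScale n (hform u u) := by
  rw [frame]
  set U := replicateCol (Fin 1) u
  have hAU : Aᴴ * Jmat n * U = 0 := by rw [← replicateCol_mulVec, hAu, replicateCol_zero]
  have hWU : Wᴴ * Jmat n * U = 0 := by rw [← replicateCol_mulVec, hWu, replicateCol_zero]
  have hUU : Uᴴ * Jmat n * U = of fun _ _ => hform u u := by
    ext a b
    exact conjTranspose_mul_Jmat_mul_apply U U a b
  have hWA : Wᴴ * Jmat n * A = 1 := by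
    rw [← conjTranspose_conjTranspose_mul_mul Jmat_conjTranspose, hAW, conjTranspose_one]
  have hUA : Uᴴ * Jmat n * A = 0 := by
    rw [← conjTranspose_conjTranspose_mul_mul Jmat_conjTranspose, hAU, conjTranspose_zero]
  have hUW : Uᴴ * Jmat n * W = 0 := by
    rw [← conjTranspose_conjTranspose_mul_mul Jmat_conjTranspose, hWU, conjTranspose_zero]
  simp only [conjTranspose_fromCols_eq_fromRows_conjTranspose, fromRows_mul,
    mul_fromCols, hAA, hAW, hWW, hAU, hWU, hUU, hWA, hUA, hUW]
  ext (a | a | a) (b | b | b) <;> simp [midScale, Jmat, one_apply]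

theorem frame_mulVec_injective {c : ℂ}
    (hgram : (frame A W u)ᴴ * Jmat n * frame A W u = Jmat n * midScale n c) (hu : u ≠ 0) :
    Function.Injective (frame A W u).mulVec := by
  refine (injective_iff_map_eq_zero (frame A W u).mulVecLin).mpr fun x hx => ?_
  replace hx : frame A W u *ᵥ x = 0 := hx
  -- Through the Gram matrix, `x` is killed by `diag(1, c, 1)`; its middle entry then scales `u`.
  have hx' : midScale n c *ᵥ x = 0 := by
    rw [← Matrix.one_mul (midScale n c), ← Jmat_mul_self, Matrix.mul_assoc, ← hgram,
      ← mulVec_mulVec, ← mulVec_mulVec, hx, mulVec_zero, mulVec_zero]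
  have hxl (i : Fin n) : x (Sum.inl i) = 0 := by
    simpa [midScale, mulVec_diagonal] using congrFun hx' (Sum.inl i)
  have hxr (i : Fin n) : x (Sum.inr (Sum.inr i)) = 0 := by
    simpa [midScale, mulVec_diagonal] using congrFun hx' (Sum.inr (Sum.inr i))
  have hxm : x (Sum.inr (Sum.inl 0)) • u = 0 := by
    have hl : x ∘ Sum.inl = 0 := funext hxl
    have hr : (x ∘ Sum.inr) ∘ Sum.inr = 0 := funext hxr
    rw [← hx, frame, fromCols_mulVec, fromCols_mulVec, hl, hr, mulVec_zero, mulVec_zero,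
      zero_add, add_zero]
    ext k
    simp [mulVec, dotProduct, mul_comm]
  have := (smul_eq_zero.mp hxm).resolve_right hu
  ext (i | i | i)
  · exact hxl i
  · rwa [Subsingleton.elim i 0]
  · exact hxr i

theorem eq_star_det_mul_det_of_conjTranspose_mul_Jmat_mul {g : Matrix (Idx n) (Idx n) ℂ}
    {c : ℂ} (hgram : gᴴ * Jmat n * g = Jmat n * midScale n c) : c = star g.det * g.det := by
  have hdet := congrArg det hgram
  rw [det_mul, det_mul, det_conjTranspose, det_mul, det_midScale] at hdet
  refine mul_left_cancel₀ (isUnit_det_Jmat (n := n)).ne_zero ?_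
  linear_combination -hdet

end Frame

section Standard

variable {n : ℕ}

def stdFrame (n : ℕ) : Matrix (Idx n) (Fin n) ℂ := fromRows 1 0

def stdIsotropic (n : ℕ) : Submodule ℂ (Idx n → ℂ) := LinearMap.range (stdFrame n).mulVecLin

theorem map_stdIsotropic (g : Matrix (Idx n) (Idx n) ℂ) :
    (stdIsotropic n).map g.mulVecLin = LinearMap.range (g * stdFrame n).mulVecLin := by
  rw [stdIsotropic, ← LinearMap.range_comp, mulVecLin_mul]

theorem frame_mul_stdFrame (A W : Matrix (Idx n) (Fin n) ℂ) (u : Idx n → ℂ) :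
    frame A W u * stdFrame n = A := by
  simp [frame, stdFrame, fromCols_mul_fromRows]

theorem midScale_mul_stdFrame (c : ℂ) : midScale n c * stdFrame n = stdFrame n := by
  ext (i | i | i) j <;> simp [midScale, stdFrame]

theorem exists_special_isometry_map_stdIsotropic (V : Submodule ℂ (Idx n → ℂ))
    (hVrk : Module.finrank ℂ V = n) (hV : IsIsotropic V) :
    ∃ g : Matrix (Idx n) (Idx n) ℂ, gᴴ * Jmat n * g = Jmat n ∧ g.det = 1 ∧
      (stdIsotropic n).map g.mulVecLin = V := by
  obtain ⟨A, hAinj, hArange⟩ := exists_mulVec_injective_range_eq V hVrk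
  have hAA := hV.conjTranspose_mul_Jmat_mul_eq_zero hArange.le
  obtain ⟨W₀, hAW₀⟩ := exists_conjTranspose_mul_mul_eq_one isUnit_Jmat hAinj
  obtain ⟨W, hAW, hWW⟩ :=
    exists_isotropic_of_conjTranspose_mul_mul_eq_one Jmat_conjTranspose hAA hAW₀
  obtain ⟨u, hu, hAWu⟩ :=
    exists_ne_zero_mulVec_eq_zero (fromRows (Aᴴ * Jmat n) (Wᴴ * Jmat n)) (by simp)
  rw [fromRows_mulVec] at hAWu
  have hgram := conjTranspose_frame_mul_Jmat_mul_frame hAA hAW hWW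
    (congrArg (· ∘ Sum.inl) hAWu) (congrArg (· ∘ Sum.inr) hAWu)
  have hdet : (frame A W u).det ≠ 0 :=
    ((isUnit_iff_isUnit_det _).mp (mulVec_injective_iff_isUnit.mp
      (frame_mulVec_injective hgram hu))).ne_zero
  rw [eq_star_det_mul_det_of_conjTranspose_mul_Jmat_mul hgram] at hgram
  set d := (frame A W u).det
  refine ⟨frame A W u * midScale n d⁻¹, ?_, ?_, ?_⟩
  · have hd : star d⁻¹ * (star d * d) * d⁻¹ = 1 := by
      have : star d ≠ 0 := star_ne_zero.mpr hdet
      rw [star_inv₀]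
      field_simp
    rw [conjTranspose_mul_mul_mul_eq, hgram, conjTranspose_midScale_mul_Jmat_mul, hd,
      midScale_one, Matrix.mul_one]
  · rw [det_mul, det_midScale, mul_inv_cancel₀ hdet]
  · rw [map_stdIsotropic, Matrix.mul_assoc, midScale_mul_stdFrame, frame_mul_stdFrame, hArange]

end Standard

theorem su_transitive_on_isotropic_general (n : ℕ)
    (V V' : Submodule ℂ (Idx n → ℂ))
    (hVrk : Module.finrank ℂ V = n) (hV'rk : Module.finrank ℂ V' = n)
    (hV : IsIsotropic V) (hV' : IsIsotropic V') :
    ∃ g : Matrix (Idx n) (Idx n) ℂ,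
      gᴴ * Jmat n * g = Jmat n ∧ g.det = 1 ∧
      V.map (Matrix.mulVecLin g) = V' := by
  obtain ⟨g, hg, hdet, rfl⟩ := exists_special_isometry_map_stdIsotropic V hVrk hV
  obtain ⟨g', hg', hdet', rfl⟩ := exists_special_isometry_map_stdIsotropic V' hV'rk hV'
  have hunit : IsUnit g.det := hdet ▸ isUnit_one
  refine ⟨g' * g⁻¹, conjTranspose_mul_mul_mul_eq_self hg'
    (conjTranspose_nonsing_inv_mul_mul_eq_self hg hunit), ?_, ?_⟩
  · rw [det_mul, det_nonsing_inv, hdet, hdet', Ring.inverse_one, mul_one]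
  · rw [← Submodule.map_comp, ← mulVecLin_mul, nonsing_inv_mul_cancel_right _ _ hunit]

/-- the pseudo-unitary group of `𝕁` (with determinant one) acts
transitively on `n`-dimensional `𝕁`-isotropic subspaces of `ℂ^(2n+1)`. -/
theorem su_transitive_on_isotropic (n : ℕ) (hn : 1 ≤ n)
    (V V' : Submodule ℂ (Idx n → ℂ))
    (hVrk : Module.finrank ℂ V = n) (hV'rk : Module.finrank ℂ V' = n)
    (hV : IsIsotropic V) (hV' : IsIsotropic V') :
    ∃ g : Matrix (Idx n) (Idx n) ℂ,
      gᴴ * Jmat n * g = Jmat n ∧ g.det = 1 ∧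
      V.map (Matrix.mulVecLin g) = V' :=
  su_transitive_on_isotropic_general n V V' hVrk hV'rk hV hV'

end
end

section
/- Let n ≥ 1, z ∈ Matrix (Fin 1) (Fin n) ℂ and W ∈ Matrix (Fin n) (Fin n) ℂ. Let V(z,W) ⊆ ℂ^(2n+1) be the column space of the (2n+1)×n matrix whose 3×1 block form is (I; z; W) with I the n×n identity. Then V(z,W) is an n-dimensional complex subspace, and V(z,W) is 𝕁-isotropic if and only if W + Wᴴ + zᴴ * z = 0 (where zᴴ * z is the n×n matrix with (j,k)-entry conj(z_j)·z_k). -/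
open Matrix

noncomputable section

/-- The `(2n+1) × n` block matrix `(I; z; W)`. -/
def colMat {n : ℕ} (z : Matrix (Fin 1) (Fin n) ℂ) (W : Matrix (Fin n) (Fin n) ℂ) :
    Matrix (Idx n) (Fin n) ℂ :=
  Matrix.of fun i b =>
    match i with
    | Sum.inl a => if a = b then 1 else 0
    | Sum.inr (Sum.inl a) => z a b
    | Sum.inr (Sum.inr a) => W a b

lemma gram_eq {n : ℕ} (z : Matrix (Fin 1) (Fin n) ℂ) (W : Matrix (Fin n) (Fin n) ℂ) :
    (colMat z W)ᴴ * Jmat n * colMat z W = W + Wᴴ + zᴴ * z := by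
  ext j k
  simp only [Matrix.mul_apply, Matrix.add_apply, Matrix.conjTranspose_apply,
    Jmat, colMat, Matrix.of_apply]
  rw [Fintype.sum_sum_type]
  simp only [Fintype.sum_sum_type]
  simp [Finset.mul_sum, Finset.sum_ite_eq, Finset.sum_ite_eq', mul_ite, ite_mul,
    eq_comm, apply_ite]
  ring

lemma hform_mulVec {n : ℕ} (z : Matrix (Fin 1) (Fin n) ℂ) (W : Matrix (Fin n) (Fin n) ℂ)
    (v w : Fin n → ℂ) :
    hform (colMat z W *ᵥ v) (colMat z W *ᵥ w)
      = star v ⬝ᵥ (((colMat z W)ᴴ * Jmat n * colMat z W) *ᵥ w) := by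
  simp [hform, star_mulVec, Matrix.dotProduct_mulVec, Matrix.vecMul_vecMul, Matrix.mul_assoc]

/-- the column space `V(z,W)` of `(I; z; W)` is an `n`-dimensional
subspace, and it is `𝕁`-isotropic iff `W + Wᴴ + zᴴ * z = 0`. -/
theorem chart_isotropy (n : ℕ) (hn : 1 ≤ n)
    (z : Matrix (Fin 1) (Fin n) ℂ) (W : Matrix (Fin n) (Fin n) ℂ) :
    Module.finrank ℂ (LinearMap.range (Matrix.mulVecLin (colMat z W))) = n ∧
    (IsIsotropic (LinearMap.range (Matrix.mulVecLin (colMat z W))) ↔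
      W + Wᴴ + zᴴ * z = 0) := by
  constructor
  · have hinj : Function.Injective (Matrix.mulVecLin (colMat z W)) := by
      intro v w h
      funext a
      have := congrFun h (Sum.inl a)
      simpa [Matrix.mulVecLin_apply, Matrix.mulVec, dotProduct, colMat] using this
    rw [LinearMap.finrank_range_of_inj hinj]
    simp
  · constructor
    · intro hiso
      have key : ∀ v w : Fin n → ℂ,
          star v ⬝ᵥ ((W + Wᴴ + zᴴ * z) *ᵥ w) = 0 := by
        intro v w
        rw [← gram_eq, ← hform_mulVec]
        exact hiso _ ⟨v, rfl⟩ _ ⟨w, rfl⟩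
      ext j k
      have := key (Pi.single j 1) (Pi.single k 1)
      simpa [Matrix.mulVec_single, dotProduct, Pi.single_apply, apply_ite,
        Finset.sum_ite_eq'] using this
    · intro h0
      rintro x ⟨v, rfl⟩ y ⟨w, rfl⟩
      simp only [Matrix.mulVecLin_apply]
      rw [hform_mulVec, gram_eq, h0]
      simp
end
end

section
/- Let n ≥ 1 and let g be a (2n+1)×(2n+1) complex matrix with gᴴ 𝕁 g = 𝕁. Let V₀ := span(e_i : i in the first Fin n summand). Then g *ᵥ x ∈ V₀ for all x ∈ V₀ if and only if g is block upper-triangular, i.e. in the 3×3 block decomposition of g the blocks in positions (2,1), (3,1) and (3,2) are zero. -/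
open Matrix

noncomputable section

/-- The fixed isotropic subspace `V₀`, spanned by the first `n` standard basis
vectors. -/
def Vzero (n : ℕ) : Submodule ℂ (Idx n → ℂ) :=
  Submodule.span ℂ (Set.range fun i : Fin n => Pi.single (Sum.inl i : Idx n) (1 : ℂ))

lemma mem_Vzero {n : ℕ} (x : Idx n → ℂ) :
    x ∈ Vzero n ↔ ∀ j : Fin 1 ⊕ Fin n, x (Sum.inr j) = 0 := by
  constructor
  · intro hx j
    induction hx using Submodule.span_induction with
    | mem v hv => obtain ⟨i, rfl⟩ := hv; simp [Pi.single_apply]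
    | zero => simp
    | add a b _ _ ha hb => simp [ha, hb]
    | smul c a _ ha => simp [ha]
  · intro h
    have : x = ∑ i : Fin n, x (Sum.inl i) • (Pi.single (Sum.inl i) (1 : ℂ) : Idx n → ℂ) := by
      funext k
      cases k with
      | inl a => simp [Pi.single_apply]
      | inr j => simp [Pi.single_apply, h j]
    rw [this]
    exact Submodule.sum_mem _ fun i _ => Submodule.smul_mem _ _
      (Submodule.subset_span ⟨i, rfl⟩)

lemma Jmat_mul_Jmat (n : ℕ) : Jmat n * Jmat n = 1 := by
  ext i j
  cases i with
  | inl a => cases j with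
    | inl b => simp [mul_apply, Jmat, Fintype.sum_sum_type, one_apply, Finset.sum_ite_eq]
    | inr j => cases j <;> simp [mul_apply, Jmat, Fintype.sum_sum_type, one_apply, Finset.sum_ite_eq]
  | inr i => cases i with
    | inl a => cases j with
      | inl b => simp [mul_apply, Jmat, Fintype.sum_sum_type, one_apply, Finset.sum_ite_eq]
      | inr j => cases j <;> simp [mul_apply, Jmat, Fintype.sum_sum_type, one_apply,
          Finset.sum_ite_eq, Fin.fin_one_eq_zero]
    | inr a => cases j with
      | inl b => simp [mul_apply, Jmat, Fintype.sum_sum_type, one_apply, Finset.sum_ite_eq]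
      | inr j => cases j <;> simp [mul_apply, Jmat, Fintype.sum_sum_type, one_apply, Finset.sum_ite_eq]

/-- a pseudo-unitary matrix `g` preserves `V₀` iff it is block
upper-triangular, i.e. its blocks in positions (2,1), (3,1) and (3,2) vanish. -/
theorem stabilizer_is_parabolic (n : ℕ) (hn : 1 ≤ n)
    (g : Matrix (Idx n) (Idx n) ℂ)
    (hg : gᴴ * Jmat n * g = Jmat n) :
    (∀ x ∈ Vzero n, g *ᵥ x ∈ Vzero n) ↔
      ((∀ (a : Fin 1) (b : Fin n), g (Sum.inr (Sum.inl a)) (Sum.inl b) = 0) ∧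
       (∀ (a : Fin n) (b : Fin n), g (Sum.inr (Sum.inr a)) (Sum.inl b) = 0) ∧
       (∀ (a : Fin n) (b : Fin 1), g (Sum.inr (Sum.inr a)) (Sum.inr (Sum.inl b)) = 0)) := by
  constructor
  · intro H
    have key : ∀ (k : Fin 1 ⊕ Fin n) (b : Fin n), g (Sum.inr k) (Sum.inl b) = 0 := by
      intro k b
      have hmem := H _ (Submodule.subset_span ⟨b, rfl⟩)
      have := (mem_Vzero _).1 hmem k
      simpa [Matrix.mulVec_single] using this
    refine ⟨fun a b => key (Sum.inl a) b, fun a b => key (Sum.inr a) b, ?_⟩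
    -- determinant of J is nonzero
    have hJdet : (Jmat n).det ≠ 0 := by
      intro h0
      have := congrArg Matrix.det (Jmat_mul_Jmat n)
      rw [Matrix.det_mul, h0, Matrix.det_one, mul_zero] at this
      exact zero_ne_one this
    -- determinant of g is nonzero
    have hgdet : g.det ≠ 0 := by
      intro h0
      have := congrArg Matrix.det hg
      rw [Matrix.det_mul, Matrix.det_mul, h0, mul_zero] at this
      exact hJdet this.symm
    -- block decomposition of g
    have hblock : g = Matrix.fromBlocks (Matrix.toBlocks₁₁ g) (Matrix.toBlocks₁₂ g)
        0 (Matrix.toBlocks₂₂ g) := by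
      have h21 : Matrix.toBlocks₂₁ g = 0 := by
        ext i j; exact key i j
      rw [← h21, Matrix.fromBlocks_toBlocks]
    have hAdet : (Matrix.toBlocks₁₁ g).det ≠ 0 := by
      intro h0
      apply hgdet
      rw [hblock, Matrix.det_fromBlocks_zero₂₁, h0, zero_mul]
    intro a b
    -- the vector of entries of the (3,2) block at column b
    set w : Fin n → ℂ := fun a => g (Sum.inr (Sum.inr a)) (Sum.inr (Sum.inl b)) with hw
    have heq : ∀ c : Fin n,
        ∑ a : Fin n, (starRingEnd ℂ) (g (Sum.inl a) (Sum.inl c))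
          * g (Sum.inr (Sum.inr a)) (Sum.inr (Sum.inl b)) = 0 := by
      intro c
      have h := congrFun (congrFun hg (Sum.inl c)) (Sum.inr (Sum.inl b))
      simp [mul_apply, Jmat, Fintype.sum_sum_type, conjTranspose_apply, key,
        Finset.sum_ite_eq, Finset.mul_sum, Finset.sum_mul] at h
      exact h
    have hmv : (Matrix.toBlocks₁₁ g)ᴴ *ᵥ w = 0 := by
      funext c
      have := heq c
      simpa [Matrix.mulVec, dotProduct, Matrix.conjTranspose_apply,
        Matrix.toBlocks₁₁, hw] using this
    have hdetH : ((Matrix.toBlocks₁₁ g)ᴴ).det ≠ 0 := by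
      rw [Matrix.det_conjTranspose]
      exact star_ne_zero.mpr hAdet
    have := Matrix.eq_zero_of_mulVec_eq_zero hdetH hmv
    exact congrFun this a
  · rintro ⟨h21, h31, _⟩ x hx
    rw [mem_Vzero] at hx ⊢
    intro j
    cases j with
    | inl a => simp [Matrix.mulVec, dotProduct, Fintype.sum_sum_type, hx, h21]
    | inr a => simp [Matrix.mulVec, dotProduct, Fintype.sum_sum_type, hx, h31]
end
end

section
/- Let n ≥ 1 and let g be a (2n+1)×(2n+1) complex matrix with gᴴ 𝕁 g = 𝕁 and det g = 1. Then g maps every n-dimensional 𝕁-isotropic subspace V of ℂ^(2n+1) onto itself (i.e. the image of V under x ↦ g *ᵥ x equals V for every such V) if and only if g = β • 1 is a scalar multiple of the identity with β^(2n+1) = 1. In other words, the kernel of the action of SU(𝕁) on the space of n-dimensional 𝕁-isotropic subspaces is the cyclic group ℤ_(2n+1) of scalar matrices whose scalar is a (2n+1)-st root of unity. -/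
open Matrix

noncomputable section

/-! Write `e_k`, `m`, `f_k` for the standard basis vectors of the three blocks.
The coordinate subspaces spanned by one of `e_k`, `f_k` for each `k` are isotropic, and `g`
preserving all of them forces every column of `g` except the middle one to be diagonal.
Replacing `e_i` in such a subspace by `m + c e_i + d f_i`, isotropic when `1 + 2 Re (c̄ d) = 0`,
gives `g (e_i) m = c (g m m - g e_i e_i)`; the two choices `(c, d) = (1, -1/2)` and `(I, -I/2)`
then force `g e_i e_i = g m m` and `g e_i m = 0`, and likewise for `f_i`. So `g` is scalar, and
`det g = 1` says that the scalar is a `(2n+1)`-st root of unity. -/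

section

variable {n : ℕ}

def hformₛₗ (n : ℕ) : (Idx n → ℂ) →ₗ⋆[ℂ] (Idx n → ℂ) →ₗ[ℂ] ℂ :=
  Matrix.toLinearMapₛₗ₂' ℂ (starRingEnd ℂ) (RingHom.id ℂ) (Jmat n)

lemma hformₛₗ_apply (x y : Idx n → ℂ) : hformₛₗ n x y = hform x y := by
  simp only [hformₛₗ, Matrix.toLinearMapₛₗ₂'_apply, hform, dotProduct, mulVec, Finset.mul_sum,
    Pi.star_apply, starRingEnd_apply, RingHom.id_apply, smul_eq_mul]
  exact Finset.sum_congr rfl fun _ _ => Finset.sum_congr rfl fun _ _ => by ring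

lemma hform_single_single (r q : Idx n) :
    hform (Pi.single r (1 : ℂ)) (Pi.single q 1) = Jmat n r q := by
  rw [← hformₛₗ_apply, hformₛₗ, Matrix.toLinearMapₛₗ₂'_single]

lemma isIsotropic_span {s : Set (Idx n → ℂ)} (hs : ∀ x ∈ s, ∀ y ∈ s, hform x y = 0) :
    IsIsotropic (Submodule.span ℂ s) := by
  intro x hx y hy
  have hsy : ∀ x ∈ s, hformₛₗ n x y = 0 := fun x' hx' =>
    LinearMap.eqOn_span (g := 0) (fun y' hy' => (hformₛₗ_apply x' y').trans (hs x' hx' y' hy')) hy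
  rw [← hformₛₗ_apply, ← LinearMap.flip_apply]
  exact LinearMap.eqOn_span (f := (hformₛₗ n).flip y) (g := 0) hsy hx

end

lemma linearIndependent_of_pivots {K ι κ : Type*} [Ring K] [Fintype κ] [DecidableEq κ]
    {u : κ → ι → K} (p : κ → ι) (hp : ∀ k l, u k (p l) = if k = l then 1 else 0) :
    LinearIndependent K u := by
  rw [Fintype.linearIndependent_iff]
  intro c hc l
  simpa [Finset.sum_apply, hp] using congrFun hc (p l)

lemma exists_isotropic_coordinates {n : ℕ} {r q : Idx n} (hq : q ≠ Sum.inr (Sum.inl 0))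
    (hrq : r ≠ q) :
    ∃ p : Fin n → Idx n, Function.Injective p ∧ (∀ k l, Jmat n (p k) (p l) = 0) ∧
      r ∉ Set.range p ∧ q ∈ Set.range p := by
  let s : Fin n → Prop := fun k => q = Sum.inl k ∨ r = Sum.inr (Sum.inr k)
  let p : Fin n → Idx n := fun k => if s k then Sum.inl k else Sum.inr (Sum.inr k)
  refine ⟨p, fun k l hkl => ?_, fun k l => ?_, ?_, ?_⟩
  · simp only [p] at hkl
    split_ifs at hkl <;> simpa using hkl
  · simp only [p]
    split_ifs with hk hl hl <;> simp only [Jmat, of_apply, ite_eq_right_iff] <;>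
      rintro rfl <;> contradiction
  · rintro ⟨k, hk⟩
    simp only [p, s] at hk
    split_ifs at hk <;> grind
  · rcases q with i | t | i
    · exact ⟨i, by simp [p, s]⟩
    · exact absurd (by rw [Subsingleton.elim t 0]) hq
    · exact ⟨i, by simp [p, s, hrq]⟩

def midFamily {n : ℕ} (c d : ℂ) (i : Fin n) (k : Fin n) : Idx n → ℂ :=
  if k = i then
    Pi.single (Sum.inr (Sum.inl 0)) 1 + c • Pi.single (Sum.inl i) 1 +
      d • Pi.single (Sum.inr (Sum.inr i)) 1
  else Pi.single (Sum.inl k) 1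

section midFamily

variable {n : ℕ} {c d : ℂ}

lemma linearIndependent_midFamily (c d : ℂ) (i : Fin n) :
    LinearIndependent ℂ (midFamily c d i) :=
  linearIndependent_of_pivots (fun k => if k = i then Sum.inr (Sum.inl 0) else Sum.inl k)
    fun k l => by
      by_cases hk : k = i <;> by_cases hl : l = i <;>
        simp [midFamily, hk, hl, Pi.single_apply] <;> grind

lemma hform_midFamily (hcd : 1 + star c * d + star d * c = 0) (i k l : Fin n) :
    hform (midFamily c d i k) (midFamily c d i l) = 0 := by
  rw [← hformₛₗ_apply]
  by_cases hk : k = i <;> by_cases hl : l = i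
  · simpa [midFamily, hk, hl, hformₛₗ, Jmat] using hcd
  · simp [midFamily, hk, hl, hformₛₗ, Jmat, Ne.symm hl]
  · simp [midFamily, hk, hl, hformₛₗ, Jmat]
  · simp [midFamily, hk, hl, hformₛₗ, Jmat]

end midFamily

def FixesIsotropicSubspaces {n : ℕ} (g : Matrix (Idx n) (Idx n) ℂ) : Prop :=
  ∀ V : Submodule ℂ (Idx n → ℂ),
    Module.finrank ℂ V = n → IsIsotropic V → V.map (Matrix.mulVecLin g) = V

namespace FixesIsotropicSubspaces

variable {n : ℕ} {g : Matrix (Idx n) (Idx n) ℂ}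

lemma apply_mulVec_eq_zero (hg : FixesIsotropicSubspaces g) {u : Fin n → Idx n → ℂ}
    (hu : LinearIndependent ℂ u) (hiso : ∀ k l, hform (u k) (u l) = 0)
    {φ : (Idx n → ℂ) →ₗ[ℂ] ℂ} (hφ : ∀ k, φ (u k) = 0) (k : Fin n) :
    φ (g *ᵥ u k) = 0 := by
  have hker : Submodule.span ℂ (Set.range u) ≤ LinearMap.ker φ :=
    Submodule.span_le.2 (Set.range_subset_iff.2 hφ)
  have hfix := hg _ (by simpa using finrank_span_eq_card hu)
    (isIsotropic_span (by rintro _ ⟨k, rfl⟩ _ ⟨l, rfl⟩; exact hiso k l))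
  exact hker (hfix ▸ Submodule.mem_map_of_mem (Submodule.subset_span (Set.mem_range_self k)))

lemma apply_eq_zero_of_notMem_range (hg : FixesIsotropicSubspaces g) {p : Fin n → Idx n}
    (hp : Function.Injective p) (hiso : ∀ k l, Jmat n (p k) (p l) = 0) {r : Idx n}
    (hr : r ∉ Set.range p) (k : Fin n) : g r (p k) = 0 := by
  have h := hg.apply_mulVec_eq_zero ((Pi.basisFun ℂ (Idx n)).linearIndependent.comp p hp)
    (fun k l => by simpa using (hform_single_single (p k) (p l)).trans (hiso k l))
    (φ := LinearMap.proj r) (fun k => by simpa [Pi.single_apply] using fun h => hr ⟨k, h.symm⟩) k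
  simpa [mulVec_single_one] using h

lemma apply_eq_zero_of_ne (hg : FixesIsotropicSubspaces g) {r q : Idx n}
    (hq : q ≠ Sum.inr (Sum.inl 0)) (hrq : r ≠ q) : g r q = 0 := by
  obtain ⟨p, hp, hiso, hr, k, rfl⟩ := exists_isotropic_coordinates hq hrq
  exact hg.apply_eq_zero_of_notMem_range hp hiso hr k

lemma apply_mid_eq_mul (hg : FixesIsotropicSubspaces g) {c d : ℂ}
    (hcd : 1 + star c * d + star d * c = 0) (i : Fin n) :
    g (Sum.inl i) (Sum.inr (Sum.inl 0)) =
        c * (g (Sum.inr (Sum.inl 0)) (Sum.inr (Sum.inl 0)) - g (Sum.inl i) (Sum.inl i)) ∧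
      g (Sum.inr (Sum.inr i)) (Sum.inr (Sum.inl 0)) =
        d * (g (Sum.inr (Sum.inl 0)) (Sum.inr (Sum.inl 0)) -
          g (Sum.inr (Sum.inr i)) (Sum.inr (Sum.inr i))) := by
  let m : Idx n := Sum.inr (Sum.inl 0)
  have hu := linearIndependent_midFamily (n := n) c d i
  have hiso := hform_midFamily hcd i
  have hgw : ∀ r, (g *ᵥ midFamily c d i i) r =
      g r m + c * g r (Sum.inl i) + d * g r (Sum.inr (Sum.inr i)) := by
    intro r
    simp [midFamily, mulVec_add, mulVec_smul, m]
  have hm : (g *ᵥ midFamily c d i i) m = g m m := by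
    rw [hgw, hg.apply_eq_zero_of_ne (q := Sum.inl i) (by simp) (by simp [m]),
      hg.apply_eq_zero_of_ne (q := Sum.inr (Sum.inr i)) (by simp) (by simp [m])]
    ring
  -- `x ↦ x e_i - c x m` and `x ↦ x f_i - d x m` vanish on the family, hence on `g` of it
  constructor
  · have h := hg.apply_mulVec_eq_zero hu hiso
      (φ := LinearMap.proj (Sum.inl i) - c • LinearMap.proj m)
      (fun k => by by_cases hk : k = i <;> simp [midFamily, m, hk]) i
    simp only [LinearMap.sub_apply, LinearMap.smul_apply, LinearMap.coe_proj,
      Function.eval, smul_eq_mul, hm] at h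
    rw [hgw, hg.apply_eq_zero_of_ne (q := Sum.inr (Sum.inr i)) (by simp) (by simp)] at h
    linear_combination h
  · have h := hg.apply_mulVec_eq_zero hu hiso
      (φ := LinearMap.proj (Sum.inr (Sum.inr i)) - d • LinearMap.proj m)
      (fun k => by by_cases hk : k = i <;> simp [midFamily, m, hk]) i
    simp only [LinearMap.sub_apply, LinearMap.smul_apply, LinearMap.coe_proj,
      Function.eval, smul_eq_mul, hm] at h
    rw [hgw, hg.apply_eq_zero_of_ne (q := Sum.inl i) (by simp) (by simp)] at h
    linear_combination h

lemma eq_smul_one (hg : FixesIsotropicSubspaces g) :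
    g = g (Sum.inr (Sum.inl 0)) (Sum.inr (Sum.inl 0)) • (1 : Matrix (Idx n) (Idx n) ℂ) := by
  set μ := g (Sum.inr (Sum.inl 0)) (Sum.inr (Sum.inl 0))
  have hI : (1 : ℂ) - Complex.I ≠ 0 := by simp [sub_eq_zero, Complex.ext_iff]
  have hmid : ∀ i, g (Sum.inl i) (Sum.inr (Sum.inl 0)) = 0 ∧ g (Sum.inl i) (Sum.inl i) = μ ∧
      g (Sum.inr (Sum.inr i)) (Sum.inr (Sum.inl 0)) = 0 ∧
      g (Sum.inr (Sum.inr i)) (Sum.inr (Sum.inr i)) = μ := by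
    intro i
    obtain ⟨hE₁, hF₁⟩ := hg.apply_mid_eq_mul (c := 1) (d := -1 / 2) (by norm_num) i
    obtain ⟨hE₂, hF₂⟩ := hg.apply_mid_eq_mul (c := Complex.I) (d := -Complex.I / 2)
      (by simp only [RCLike.star_def, Complex.conj_I, star_div₀, star_neg, star_ofNat]
          linear_combination Complex.I_sq) i
    have hE : μ - g (Sum.inl i) (Sum.inl i) = 0 :=
      (mul_eq_zero.1 (by linear_combination hE₂ - hE₁)).resolve_left hI
    have hF : μ - g (Sum.inr (Sum.inr i)) (Sum.inr (Sum.inr i)) = 0 :=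
      (mul_eq_zero.1 (by linear_combination 2 * (hF₁ - hF₂))).resolve_left hI
    exact ⟨by linear_combination hE₁ + hE, by linear_combination -hE,
      by linear_combination hF₁ - 1 / 2 * hF, by linear_combination -hF⟩
  ext r q
  rw [Matrix.smul_apply, one_apply, smul_eq_mul, mul_ite, mul_one, mul_zero]
  rcases q with i | t | i
  · obtain rfl | hr := eq_or_ne r (Sum.inl i)
    · simp [(hmid i).2.1]
    · simp [hr, hg.apply_eq_zero_of_ne (by simp) hr]
  · obtain rfl := Subsingleton.elim t 0
    rcases r with j | t | j
    · simp [(hmid j).1]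
    · obtain rfl := Subsingleton.elim t 0
      simp [μ]
    · simp [(hmid j).2.2.1]
  · obtain rfl | hr := eq_or_ne r (Sum.inr (Sum.inr i))
    · simp [(hmid i).2.2.2]
    · simp [hr, hg.apply_eq_zero_of_ne (by simp) hr]

end FixesIsotropicSubspaces

lemma card_idx (n : ℕ) : Fintype.card (Idx n) = 2 * n + 1 := by
  simp only [Fintype.card_sum, Fintype.card_fin]
  ring

theorem kernel_of_action_general (n : ℕ)
    (g : Matrix (Idx n) (Idx n) ℂ)
    (hdet : g.det = 1) :
    (∀ V : Submodule ℂ (Idx n → ℂ),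
        Module.finrank ℂ V = n → IsIsotropic V →
        V.map (Matrix.mulVecLin g) = V) ↔
      ∃ β : ℂ, β ^ (2 * n + 1) = 1 ∧ g = β • (1 : Matrix (Idx n) (Idx n) ℂ) := by
  constructor
  · intro hg
    obtain ⟨β, rfl⟩ : ∃ β : ℂ, g = β • 1 := ⟨_, FixesIsotropicSubspaces.eq_smul_one hg⟩
    rw [det_smul, det_one, mul_one, card_idx] at hdet
    exact ⟨β, hdet, rfl⟩
  · rintro ⟨β, hβ, rfl⟩ V - -
    have hβ0 : β ≠ 0 := by
      rintro rfl
      simp at hβ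
    have hscalar : Matrix.mulVecLin (β • 1 : Matrix (Idx n) (Idx n) ℂ) = β • LinearMap.id := by
      ext1 x
      simp
    rw [hscalar, Submodule.map_smul _ _ _ hβ0, Submodule.map_id]

/-- a special pseudo-unitary matrix `g` fixes every `n`-dimensional
`𝕁`-isotropic subspace iff `g = β • 1` with `β^(2n+1) = 1`; i.e. the kernel of
the action on the space of such subspaces is `ℤ_(2n+1)`. -/
theorem kernel_of_action (n : ℕ) (hn : 1 ≤ n)
    (g : Matrix (Idx n) (Idx n) ℂ)
    (hg : gᴴ * Jmat n * g = Jmat n) (hdet : g.det = 1) :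
    (∀ V : Submodule ℂ (Idx n → ℂ),
        Module.finrank ℂ V = n → IsIsotropic V →
        V.map (Matrix.mulVecLin g) = V) ↔
      ∃ β : ℂ, β ^ (2 * n + 1) = 1 ∧ g = β • (1 : Matrix (Idx n) (Idx n) ℂ) :=
  kernel_of_action_general n g hdet
end
end

section
/- Let n ≥ 1. The real linear span of the set { S(x,y) : x, y ∈ ℂ^n } equals the full real subspace of skew-Hermitian n×n complex matrices, i.e. Submodule.span ℝ { S(x,y) } = skewAdjoint (Matrix (Fin n) (Fin n) ℂ). (This is the non-degeneracy of the Levi bracket of the flat model: the grade −2 part is generated by brackets of grade −1 elements.) -/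
/-!
Writing `S(x,y) = x̄ yᵀ - ȳ xᵀ` shows that `S(x,y)` is skew-Hermitian. Conversely, if `A` is
skew-Hermitian and `eᵢ` are the standard basis vectors, then `∑ᵢ S(eᵢ, Aᵢ) = A - Aᴴ = 2A`,
where `Aᵢ` is the `i`-th row of `A`.
-/

open Matrix

noncomputable section

/-- The skew-Hermitian matrix `S(x,y)` with entries
`S(x,y)_jk = conj(x_j)·y_k − conj(y_j)·x_k`. -/
def Smat {n : ℕ} (x y : Fin n → ℂ) : Matrix (Fin n) (Fin n) ℂ :=
  Matrix.of fun j k => star (x j) * y k - star (y j) * x k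

theorem Matrix.sum_vecMulVec_single_one {ι α : Type*} [Fintype ι] [DecidableEq ι]
    [NonAssocSemiring α] (A : Matrix ι ι α) :
    ∑ i, vecMulVec (Pi.single i 1) (A i) = A := by
  ext j k
  simp [Matrix.sum_apply, vecMulVec_apply, Pi.single_apply]

lemma Smat_eq_vecMulVec {n : ℕ} (x y : Fin n → ℂ) :
    Smat x y = vecMulVec (star x) y - vecMulVec (star y) x :=
  rfl

lemma Smat_mem_skewAdjoint {n : ℕ} (x y : Fin n → ℂ) :
    Smat x y ∈ skewAdjoint (Matrix (Fin n) (Fin n) ℂ) := by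
  rw [skewAdjoint.mem_iff, Smat_eq_vecMulVec, star_eq_conjTranspose, conjTranspose_sub,
    conjTranspose_vecMulVec, conjTranspose_vecMulVec, star_star, star_star, neg_sub]

lemma sum_Smat_single_one {n : ℕ} {A : Matrix (Fin n) (Fin n) ℂ}
    (hA : A ∈ skewAdjoint (Matrix (Fin n) (Fin n) ℂ)) :
    ∑ i, Smat (Pi.single i 1) (A i) = (2 : ℝ) • A := by
  have hAH : ∑ i, vecMulVec (star (A i)) (Pi.single i 1) = -A := by
    rw [← skewAdjoint.mem_iff.mp hA, star_eq_conjTranspose]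
    conv_rhs => rw [← sum_vecMulVec_single_one A]
    simp [conjTranspose_sum, conjTranspose_vecMulVec]
  have hstar (i : Fin n) : star (Pi.single i 1 : Fin n → ℂ) = Pi.single i 1 := by
    rw [← Pi.single_star, star_one]
  simp only [Smat_eq_vecMulVec, Finset.sum_sub_distrib, hstar, sum_vecMulVec_single_one, hAH]
  rw [sub_neg_eq_add, ← two_smul ℝ]

theorem span_of_Levi_brackets_general (n : ℕ) :
    (Submodule.span ℝ {A : Matrix (Fin n) (Fin n) ℂ | ∃ x y : Fin n → ℂ, A = Smat x y} :
        Set (Matrix (Fin n) (Fin n) ℂ)) =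
      (skewAdjoint (Matrix (Fin n) (Fin n) ℂ) : Set (Matrix (Fin n) (Fin n) ℂ)) := by
  refine Set.Subset.antisymm ?_ fun A hA => ?_
  · refine (Submodule.span_le (p := skewAdjoint.submodule ℝ _)).mpr ?_
    rintro _ ⟨x, y, rfl⟩
    exact Smat_mem_skewAdjoint x y
  · have hA_eq : A = (2⁻¹ : ℝ) • ∑ i, Smat (Pi.single i 1) (A i) := by
      rw [sum_Smat_single_one hA, smul_smul]
      norm_num
    rw [hA_eq]
    exact Submodule.smul_mem _ _ <|
      Submodule.sum_mem _ fun i _ => Submodule.subset_span ⟨_, _, rfl⟩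

/-- the real linear span of the values `S(x,y)` of the Levi
bracket is the whole real space of skew-Hermitian `n×n` complex matrices. -/
theorem span_of_Levi_brackets (n : ℕ) (hn : 1 ≤ n) :
    (Submodule.span ℝ {A : Matrix (Fin n) (Fin n) ℂ | ∃ x y : Fin n → ℂ, A = Smat x y} :
        Set (Matrix (Fin n) (Fin n) ℂ)) =
      (skewAdjoint (Matrix (Fin n) (Fin n) ℂ) : Set (Matrix (Fin n) (Fin n) ℂ)) :=
  span_of_Levi_brackets_general n
end
end

section
/- Let n ≥ 2 and let J̃ : ℂ^n → ℂ^n be an ℝ-linear map with J̃ ∘ J̃ = −id such that S(J̃x, J̃y) = S(x,y) for all x, y ∈ ℂ^n (i.e. the skew-Hermitian-matrix-valued bracket S is totally real with respect to J̃). Then J̃ is multiplication by i or multiplication by −i: J̃ = (i • ·) or J̃ = (−i • ·). -/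
/-!
For `x ≠ 0` the matrix `S(x, i x) = 2i · x̄ xᵀ` has rank one, while `S(u, v)` can only have rank
one when `u` and `v` are `ℂ`-proportional; since `S(J̃x, J̃(ix)) = S(x, ix)`, this forces `J̃x` to be
a complex multiple of `x`. An additive map sending every vector to a multiple of itself is a
homothety once the dimension is at least two (compare `v`, `w` and `v + w` for independent `v`, `w`),
so `J̃ = a • id` with `a² = -1`.
-/

open Matrix

noncomputable section

open Module

section Homothety

variable {K V F : Type*} [Field K] [AddCommGroup V] [Module K V] [FunLike F V V]

theorem eq_of_apply_eq_smul_of_linearIndependent_pair [AddHomClass F V V] {f : F} {v w : V}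
    {a b c : K} (hvw : LinearIndependent K ![v, w]) (hv : f v = a • v) (hw : f w = b • w)
    (hvw' : f (v + w) = c • (v + w)) : a = b := by
  have h : (a - c) • v + (b - c) • w = 0 := by
    rw [sub_smul, sub_smul, ← hv, ← hw, sub_add_sub_comm, ← map_add, hvw', smul_add, sub_self]
  obtain ⟨hac, hbc⟩ := LinearIndependent.pair_iff.1 hvw _ _ h
  rw [sub_eq_zero.1 hac, sub_eq_zero.1 hbc]

theorem exists_forall_apply_eq_smul_of_one_lt_finrank [AddHomClass F V V]
    (hV : 1 < finrank K V) (f : F) (hf : ∀ v, ∃ a : K, f v = a • v) :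
    ∃ a : K, ∀ v, f v = a • v := by
  choose a ha using hf
  have hscalar : ∀ {x y : V}, LinearIndependent K ![x, y] → a x = a y := fun h =>
    eq_of_apply_eq_smul_of_linearIndependent_pair h (ha _) (ha _) (ha _)
  have : Nontrivial V := nontrivial_of_finrank_pos (zero_lt_one.trans hV)
  obtain ⟨v₀, hv₀⟩ := exists_ne (0 : V)
  obtain ⟨w, hv₀w⟩ := exists_linearIndependent_pair_of_one_lt_finrank hV hv₀
  refine ⟨a v₀, fun v => ?_⟩
  by_cases h₀ : LinearIndependent K ![v₀, v]
  · rw [ha v, hscalar h₀]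
  by_cases h₁ : LinearIndependent K ![w, v]
  · rw [ha v, hscalar hv₀w, hscalar h₁]
  -- `v` lies on both of the independent lines `K v₀` and `K w`, so it vanishes.
  have hw : w ≠ 0 := by simpa using hv₀w.ne_zero 1
  obtain ⟨c, rfl⟩ : ∃ c : K, c • v₀ = v := by
    simpa [LinearIndependent.pair_iff' hv₀] using h₀
  obtain ⟨d, hd⟩ : ∃ d : K, d • w = c • v₀ := by
    simpa [LinearIndependent.pair_iff' hw] using h₁
  obtain ⟨rfl, -⟩ := LinearIndependent.pair_iff.1 hv₀w c (-d) (by rw [neg_smul, hd, add_neg_cancel])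
  rw [ha, zero_smul, smul_zero, smul_zero]

end Homothety

theorem exists_eq_smul_of_forall_mul_eq_mul {ι K : Type*} [Field K] {u x : ι → K} (hx : x ≠ 0)
    (h : ∀ j k, u j * x k = x j * u k) : ∃ β : K, u = β • x := by
  obtain ⟨p, hp⟩ := Function.ne_iff.1 hx
  refine ⟨u p / x p, funext fun k => ?_⟩
  rw [Pi.smul_apply, smul_eq_mul, div_mul_eq_mul_div, eq_div_iff hp, h p k, mul_comm]

theorem mul_eq_mul_of_Smat_eq_Smat_I_smul {n : ℕ} {u v x : Fin n → ℂ}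
    (h : Smat u v = Smat x (Complex.I • x)) (j k : Fin n) : u j * x k = x j * u k := by
  have hE : ∀ a b, star (u a) * v b - star (v a) * u b = 2 * Complex.I * star (x a) * x b := by
    intro a b
    have := congrFun (congrFun h a) b
    simp only [Smat, of_apply, Pi.smul_apply, smul_eq_mul, star_mul', Complex.star_def,
      Complex.conj_I] at this ⊢
    linear_combination this
  -- The left-hand sides cancel in this combination, leaving `2i |u_j x_k - x_j u_k|²`.
  have hw : 2 * Complex.I * (star (u j * x k - x j * u k) * (u j * x k - x j * u k)) = 0 := by
    simp only [star_sub, star_mul']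
    linear_combination (-(u j * star (u j))) * hE k k + (u j * star (u k)) * hE j k
        + (star (u j) * u k) * hE k j - (star (u k) * u k) * hE j j
  have : star (u j * x k - x j * u k) * (u j * x k - x j * u k) = 0 :=
    (mul_eq_zero.1 hw).resolve_left (by simp)
  simpa only [mul_eq_zero, star_eq_zero, or_self, sub_eq_zero] using this

theorem exists_apply_eq_smul_of_Smat_map_eq {n : ℕ} {F : Type*}
    [FunLike F (Fin n → ℂ) (Fin n → ℂ)] [ZeroHomClass F (Fin n → ℂ) (Fin n → ℂ)] (J : F)
    (hS : ∀ x y, Smat (J x) (J y) = Smat x y) (x : Fin n → ℂ) : ∃ β : ℂ, J x = β • x := by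
  rcases eq_or_ne x 0 with rfl | hx
  · exact ⟨0, by simp⟩
  exact exists_eq_smul_of_forall_mul_eq_mul hx (mul_eq_mul_of_Smat_eq_Smat_I_smul (hS x _))

/-- if an `ℝ`-linear complex structure `J̃` on `ℂ^n` (`n ≥ 2`)
leaves the skew-Hermitian-matrix-valued bracket `S` totally real, then
`J̃ = ±i`. -/
theorem complex_structure_unique (n : ℕ) (hn : 2 ≤ n)
    (Jt : (Fin n → ℂ) →ₗ[ℝ] (Fin n → ℂ))
    (hJ2 : ∀ x, Jt (Jt x) = -x)
    (hS : ∀ x y, Smat (Jt x) (Jt y) = Smat x y) :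
    (∀ x, Jt x = Complex.I • x) ∨ (∀ x, Jt x = (-Complex.I) • x) := by
  have hrank : 1 < finrank ℂ (Fin n → ℂ) := by simpa using (show 1 < n by omega)
  obtain ⟨a, ha⟩ := exists_forall_apply_eq_smul_of_one_lt_finrank hrank Jt
    (exists_apply_eq_smul_of_Smat_map_eq Jt hS)
  have : Nontrivial (Fin n → ℂ) := nontrivial_of_finrank_pos (zero_lt_one.trans hrank)
  obtain ⟨v, hv⟩ := exists_ne (0 : Fin n → ℂ)
  have hsq : a ^ 2 = Complex.I ^ 2 := by
    have h : (a * a + 1) • v = 0 := by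
      rw [add_smul, one_smul, ← smul_smul, ← ha, ← ha, hJ2, neg_add_cancel]
    linear_combination (smul_eq_zero.1 h).resolve_right hv - Complex.I_sq
  rcases sq_eq_sq_iff_eq_or_eq_neg.1 hsq with rfl | rfl
  · exact .inl ha
  · exact .inr ha
end
end

section
/- Let n ≥ 2 and let A : ℂ^n → ℂ^n be an ℝ-linear bijection. Suppose there exists an ℝ-linear bijection Ã of the real space of skew-Hermitian n×n complex matrices such that S(A x, A y) = Ã(S(x,y)) for all x, y ∈ ℂ^n (i.e. A extends to a Lie algebra automorphism of the graded nilpotent algebra 𝔤₋ = ℂ^n ⊕ {skew-Hermitian matrices} with bracket S). Then A is complex linear or complex anti-linear: either A(i • x) = i • A(x) for all x, or A(i • x) = −i • A(x) for all x. -/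
open Matrix

noncomputable section

/-- The real space of skew-Hermitian `n×n` complex matrices, as a real
submodule of the `n×n` complex matrices. -/
def skewHerm (n : ℕ) : Submodule ℝ (Matrix (Fin n) (Fin n) ℂ) where
  carrier := {A | Aᴴ = -A}
  add_mem' := by
    intro a b ha hb
    simp only [Set.mem_setOf_eq] at *
    rw [Matrix.conjTranspose_add, ha, hb, neg_add]
  zero_mem' := by
    simp only [Set.mem_setOf_eq, Matrix.conjTranspose_zero, neg_zero]
  smul_mem' := by
    intro c A hA
    simp only [Set.mem_setOf_eq] at *
    rw [Matrix.conjTranspose_smul, star_trivial, hA, smul_neg]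

lemma Smat_mem_skewHerm (n : ℕ) (x y : Fin n → ℂ) : Smat x y ∈ skewHerm n := by
  show (Smat x y)ᴴ = -(Smat x y)
  ext j k
  simp only [Smat, Matrix.conjTranspose_apply, Matrix.neg_apply, Matrix.of_apply,
    star_sub, star_mul', star_star]
  ring

/-! Conjugating multiplication by `i` with `A` gives an `ℝ`-linear `J` with `J² = -1`; since
`S(x, iy) = S(y, ix)` and `S(A·, A·)` is a function of `S`, also `S(X, JY) = S(Y, JX)`.
Evaluated at `(v, iv)` and `(iv, Jv)`, this identity becomes an equality of rank-one matrices
forcing `Jv ∈ ℂv`. An additive map preserving every complex line of a space of dimension at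
least two is a complex scalar `c`, and `c² = -1` gives `c = ±i`. -/

open Complex

lemma exists_eq_smul_of_mul_eq_mul {ι K : Type*} [Field K] {a b c d : ι → K}
    (h : ∀ j k, a j * b k = c j * d k) (ha : a ≠ 0) : ∃ t : K, b = t • d := by
  obtain ⟨j, hj⟩ := Function.ne_iff.mp ha
  refine ⟨c j / a j, funext fun k => ?_⟩
  rw [Pi.smul_apply, smul_eq_mul, div_mul_eq_mul_div, eq_div_iff hj]
  linear_combination h j k

section ScalarMaps

variable {K V F : Type*} [Field K] [AddCommGroup V] [Module K V] [FunLike F V V]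
  [AddMonoidHomClass F V V]

lemma eq_of_linearIndependent_pair {f : F} (hf : ∀ v ≠ 0, ∃ c : K, f v = c • v)
    {x y : V} (hxy : LinearIndependent K ![x, y]) {a b : K} (ha : f x = a • x)
    (hb : f y = b • y) : a = b := by
  have hsum : x + y ≠ 0 := fun h =>
    one_ne_zero (LinearIndependent.pair_iff.mp hxy 1 1 (by simpa using h)).1
  obtain ⟨s, hs⟩ := hf (x + y) hsum
  have h := LinearIndependent.pair_iff.mp hxy (a - s) (b - s) (by
    rw [sub_smul, sub_smul, ← ha, ← hb, sub_add_sub_comm, ← map_add, hs, smul_add, sub_self])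
  rw [sub_eq_zero, sub_eq_zero] at h
  exact h.1.trans h.2.symm

theorem exists_forall_eq_smul_of_forall_exists_eq_smul (f : F) (hV : 1 < Module.rank K V)
    (hf : ∀ v ≠ 0, ∃ c : K, f v = c • v) : ∃ c : K, ∀ v, f v = c • v := by
  have : Nontrivial V := rank_pos_iff_nontrivial (R := K).mp (zero_lt_one.trans hV)
  obtain ⟨x, hx⟩ := exists_ne (0 : V)
  obtain ⟨y, hxy⟩ := exists_linearIndependent_pair_of_one_lt_rank hV hx
  obtain ⟨c, hc⟩ := hf x hx
  obtain ⟨d, hd⟩ := hf y (by simpa using ((LinearIndependent.pair_iff' hx).mp hxy 0).symm)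
  have hcd := eq_of_linearIndependent_pair hf hxy hc hd
  refine ⟨c, fun v => ?_⟩
  rcases eq_or_ne v 0 with rfl | hv
  · simp
  obtain ⟨e, he⟩ := hf v hv
  suffices e = c by rw [he, this]
  by_cases hxv : LinearIndependent K ![x, v]
  · exact (eq_of_linearIndependent_pair hf hxv hc he).symm
  · obtain ⟨t, rfl⟩ : ∃ t : K, t • x = v := by simpa [LinearIndependent.pair_iff' hx] using hxv
    have hyv : LinearIndependent K ![t • x, y] := by
      refine (LinearIndependent.pair_iff' hv).mpr fun r hr => ?_
      exact (LinearIndependent.pair_iff' hx).mp hxy (r * t) (by rw [mul_smul, hr])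
    rw [eq_of_linearIndependent_pair hf hyv he hd, hcd]

end ScalarMaps

lemma eq_I_or_eq_neg_I_of_smul_smul_eq_neg {V : Type*} [AddCommGroup V] [Module ℂ V] {c : ℂ}
    {v : V} (hv : v ≠ 0) (h : c • c • v = -v) : c = I ∨ c = -I := by
  rw [smul_smul, ← neg_one_smul ℂ v] at h
  refine mul_self_eq_mul_self_iff.mp ?_
  rw [I_mul_I]
  exact smul_left_injective ℂ hv h

section ComplexStructure

variable {n : ℕ}

@[simp]
lemma Smat_apply (x y : Fin n → ℂ) (j k : Fin n) :
    Smat x y j k = star (x j) * y k - star (y j) * x k := rfl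

lemma Smat_smul_I_comm (x y : Fin n → ℂ) : Smat x (I • y) = Smat y (I • x) := by
  ext j k
  simp
  ring

theorem exists_eq_smul_of_Smat_comm (J : (Fin n → ℂ) → Fin n → ℂ)
    (hJ : ∀ x y, Smat x (J y) = Smat y (J x)) (hJJ : ∀ v, J (J v) = -v)
    {v : Fin n → ℂ} (hv : v ≠ 0) : ∃ c : ℂ, J v = c • v := by
  set u := J v
  set w := J (I • v)
  have h₁ : ∀ j k, star (v j) * w k - star (w j) * v k =
      star (I * v j) * u k - star (u j) * (I * v k) := fun j k =>
    by simpa using congrFun₂ (hJ v (I • v)) j k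
  have h₂ : ∀ j k, star (u j) * w k - star (w j) * u k =
      star (I * v j) * -v k - star (-v j) * (I * v k) := fun j k =>
    by simpa [u, hJJ] using (congrFun₂ (hJ (I • v) u) j k).symm
  obtain ⟨t, ht⟩ : ∃ t : ℂ, w + I • u = t • v := by
    refine exists_eq_smul_of_mul_eq_mul (a := star v) (c := star (w + I • u)) (fun j k => ?_)
      (star_ne_zero.mpr hv)
    have h := h₁ j k
    simp only [Pi.star_apply, Pi.add_apply, Pi.smul_apply, smul_eq_mul] at h ⊢
    simp only [Complex.star_def, map_mul, map_add, Complex.conj_I] at h ⊢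
    linear_combination h
  have hw : w = t • v - I • u := eq_sub_of_add_eq ht
  rcases eq_or_ne (t • v - (2 * I) • u) 0 with hp | hp
  · refine ⟨t / (2 * I), ?_⟩
    rw [sub_eq_zero] at hp
    rw [div_eq_inv_mul, mul_smul, hp, smul_smul, inv_mul_cancel₀ (by simp), one_smul]
  -- `S(u, w) = 2i·v^*v` with `w = t v - i u` rearranges to `p ⊗ u^* = q ⊗ v^*`.
  have hpq : ∀ j k, (t • v - (2 * I) • u) j * star (u k) =
      (star t • u + (2 * I) • v) j * star (v k) := by
    intro j k
    have h := h₂ k j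
    rw [hw] at h
    simp only [Pi.add_apply, Pi.sub_apply, Pi.smul_apply, smul_eq_mul] at h ⊢
    simp only [Complex.star_def, map_mul, map_sub, map_neg, Complex.conj_I] at h ⊢
    linear_combination h
  obtain ⟨s, hs⟩ := exists_eq_smul_of_mul_eq_mul (b := star u) (d := star v) hpq hp
  refine ⟨star s, funext fun k => ?_⟩
  simpa [Complex.star_def] using congrArg star (congrFun hs k)

end ComplexStructure

/-- if an `ℝ`-linear bijection `A` of `ℂ^n` (`n ≥ 2`) extends to a
Lie algebra automorphism of `𝔤₋ = ℂ^n ⊕ {skew-Hermitian matrices}` (with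
bracket `S`), then `A` is complex linear or complex anti-linear. -/
theorem extension_implies_linear_or_antilinear (n : ℕ) (hn : 2 ≤ n)
    (A : (Fin n → ℂ) →ₗ[ℝ] (Fin n → ℂ)) (hA : Function.Bijective A)
    (hext : ∃ At : skewHerm n →ₗ[ℝ] skewHerm n, Function.Bijective At ∧
      ∀ x y : Fin n → ℂ,
        (At ⟨Smat x y, Smat_mem_skewHerm n x y⟩ : Matrix (Fin n) (Fin n) ℂ) =
          Smat (A x) (A y)) :
    (∀ x, A (Complex.I • x) = Complex.I • A x) ∨
    (∀ x, A (Complex.I • x) = (-Complex.I) • A x) := by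
  obtain ⟨At, -, hAt⟩ := hext
  let e := LinearEquiv.ofBijective A hA
  let J := e.conj (DistribSMul.toLinearMap ℝ (Fin n → ℂ) I)
  have hJA : ∀ x, J (A x) = A (I • x) := fun x => by simp [J, e]
  have hJJ : ∀ v, J (J v) = -v := fun v => by
    obtain ⟨x, rfl⟩ := hA.surjective v
    rw [hJA, hJA, smul_smul, I_mul_I, neg_one_smul, map_neg]
  have hJ : ∀ X Y, Smat X (J Y) = Smat Y (J X) := by
    intro X Y
    obtain ⟨x, rfl⟩ := hA.surjective X
    obtain ⟨y, rfl⟩ := hA.surjective Y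
    rw [hJA, hJA, ← hAt, ← hAt]
    congr 3
    exact Smat_smul_I_comm x y
  have hrank : 1 < Module.rank ℂ (Fin n → ℂ) := by
    rw [rank_fin_fun]
    exact_mod_cast hn
  obtain ⟨c, hc⟩ := exists_forall_eq_smul_of_forall_exists_eq_smul J hrank
    fun v hv => exists_eq_smul_of_Smat_comm J hJ hJJ hv
  have : NeZero n := ⟨by omega⟩
  obtain ⟨v, hv⟩ := exists_ne (0 : Fin n → ℂ)
  have hAI : ∀ x, A (I • x) = c • A x := fun x => by rw [← hJA, hc]
  rcases eq_I_or_eq_neg_I_of_smul_smul_eq_neg hv (by rw [← hc, ← hc, hJJ]) with rfl | rfl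
  · exact .inl hAI
  · exact .inr hAI
end
end

section
/- Let n ≥ 2 and let P, Q, R, S be n×n complex matrices such that the 2n×2n matrix J̃ := fromBlocks P Q R S satisfies J̃·J̃ = −1, and such that for every n×n complex matrix B the matrix fromBlocks (−Q·Bᵀ) (P·B) (−S·Bᵀ) (R·B) is symmetric. Then Q = 0, R = 0, and either P = i•I and S = −i•I, or P = −i•I and S = i•I. -/
/-!
Read the symmetry condition blockwise. The diagonal blocks say that `Q Bᵀ` and `R Bᵀ` are
symmetric for every `B`, which forces `Q = R = 0` as soon as there are two indices. The
off-diagonal block with `B = 1` gives `S = -Pᵀ`, after which it says that `Pᵀ` commutes with every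
matrix, so `P = c • 1` and `S = -c • 1`. The top-left block of `J̃ * J̃ = -1` is then `c² = -1`.
-/

open Matrix

namespace Matrix

variable {ι α : Type*} [Fintype ι] [DecidableEq ι]

/-- With `B = single i j 1`, the `(a, i)` entry of `Q * Bᵀ` is `Q a j`, while its `(i, a)` entry
vanishes when `a ≠ i`. -/
theorem eq_zero_of_forall_isSymm_mul_transpose [Nontrivial ι] [Semiring α] {Q : Matrix ι ι α}
    (h : ∀ B : Matrix ι ι α, (Q * Bᵀ).IsSymm) : Q = 0 := by
  ext a j
  obtain ⟨i, hia⟩ := exists_ne a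
  simpa [transpose_single, mul_single_apply_of_ne (hbj := hia.symm)] using
    congr_fun₂ (h (single i j 1)) i a

theorem exists_smul_one_of_forall_transpose_mul_eq_neg [CommRing α] {P S : Matrix ι ι α}
    (h : ∀ B : Matrix ι ι α, (P * B)ᵀ = -(S * Bᵀ)) : ∃ c : α, P = c • 1 ∧ S = -c • 1 := by
  have hS : S = -Pᵀ := by simp [show P = -Sᵀ by simpa using congr_arg transpose (h 1)]
  have hcentral : Pᵀ ∈ Set.center (Matrix ι ι α) := Semigroup.mem_center_iff.mpr fun B => by
    simpa [hS] using h Bᵀ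
  rw [center_eq_range] at hcentral
  obtain ⟨c, hc⟩ := hcentral
  have hP : P = c • 1 := by
    rw [← transpose_transpose P, ← hc, scalar_apply, diagonal_transpose, ← smul_one_eq_diagonal]
  exact ⟨c, hP, by rw [hS, hP, transpose_smul, transpose_one, neg_smul]⟩

end Matrix

/-- if `J̃ = fromBlocks P Q R S` squares to `−1` and
`fromBlocks (−Q·Bᵀ) (P·B) (−S·Bᵀ) (R·B)` is symmetric for every `B`, then
`Q = 0`, `R = 0` and `(P,S) = (±i•I, ∓i•I)`. -/
theorem Jtilde_determined (n : ℕ) (hn : 2 ≤ n)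
    (P Q R S : Matrix (Fin n) (Fin n) ℂ)
    (hsq : Matrix.fromBlocks P Q R S * Matrix.fromBlocks P Q R S =
      -(1 : Matrix (Fin n ⊕ Fin n) (Fin n ⊕ Fin n) ℂ))
    (hsym : ∀ B : Matrix (Fin n) (Fin n) ℂ,
      (Matrix.fromBlocks (-(Q * Bᵀ)) (P * B) (-(S * Bᵀ)) (R * B)).IsSymm) :
    Q = 0 ∧ R = 0 ∧
      ((P = Complex.I • (1 : Matrix (Fin n) (Fin n) ℂ) ∧
        S = (-Complex.I) • (1 : Matrix (Fin n) (Fin n) ℂ)) ∨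
       (P = (-Complex.I) • (1 : Matrix (Fin n) (Fin n) ℂ) ∧
        S = Complex.I • (1 : Matrix (Fin n) (Fin n) ℂ))) := by
  have hblocks := fun B => isSymm_fromBlocks_iff.mp (hsym B)
  have : Nontrivial (Fin n) := Fin.nontrivial_iff_two_le.mpr hn
  have hQ : Q = 0 :=
    eq_zero_of_forall_isSymm_mul_transpose fun B => isSymm_neg_iff.mp (hblocks B).1
  have hR : R = 0 := eq_zero_of_forall_isSymm_mul_transpose fun B => (hblocks Bᵀ).2.2.2
  obtain ⟨c, rfl, rfl⟩ :=
    exists_smul_one_of_forall_transpose_mul_eq_neg fun B => (hblocks B).2.1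
  have hc : c ^ 2 = Complex.I ^ 2 := by
    obtain ⟨i⟩ : Nonempty (Fin n) := inferInstance
    simpa [fromBlocks_multiply, hQ, sq] using congr_fun₂ hsq (.inl i) (.inl i)
  rcases sq_eq_sq_iff_eq_or_eq_neg.mp hc with rfl | rfl
  · exact ⟨hQ, hR, .inl ⟨rfl, rfl⟩⟩
  · exact ⟨hQ, hR, .inr ⟨rfl, by rw [neg_neg]⟩⟩
end

section
/- Let n ≥ 3 and let f : Fin n → Fin n → Fin n → Fin n → Fin n → ℂ, written f^{ij}_{rst}, satisfy the symmetry f^{ij}_{rst} = f^{ij}_{srt} for all indices. Then there exists a unique pair of families A, B : Fin n → Fin n → Fin n → ℂ (written A^i_{rs} and B^j_{st}) satisfying: (i) Σ_i A^i_{is} = 0 for every s; (ii) A^i_{rs} − A^i_{sr} = (1/(n−2))·( conj(Σ_l B^l_{rl})·δ^i_s − conj(Σ_l B^l_{sl})·δ^i_r ) for all i, r, s; and (iii) the tensor P^{ij}_{rst} := f^{ij}_{rst} + A^i_{rs}·δ^j_t + conj(B^j_{rt})·δ^i_s + conj(B^j_{st})·δ^i_r + (1/(n−2))·Σ_l conj(B^l_{sl})·δ^j_t·δ^i_r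 satisfies Σ_j P^{ij}_{rsj} = 0 for all i, r, s and Σ_i P^{ij}_{ist} = 0 for all j, s, t. Moreover, for this unique choice, P^{ij}_{rst} = P^{ij}_{srt} (P is symmetric in r, s), so P is totally trace-free. (This is the normalization producing the fundamental curvature invariant of a free CR distribution of rank n ≥ 3.) -/
noncomputable section

/-- Kronecker delta on `Fin n`, valued in `ℂ`. -/
def kdelta {n : ℕ} (i j : Fin n) : ℂ := if i = j then 1 else 0

/-- The candidate curvature tensor
`P^{ij}_{rst} = f^{ij}_{rst} + A^i_{rs}·δ^j_t + conj(B^j_{rt})·δ^i_s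
  + conj(B^j_{st})·δ^i_r + (1/(n−2))·Σ_l conj(B^l_{sl})·δ^j_t·δ^i_r`. -/
def Ptensor (n : ℕ) (f : Fin n → Fin n → Fin n → Fin n → Fin n → ℂ)
    (A B : Fin n → Fin n → Fin n → ℂ) :
    Fin n → Fin n → Fin n → Fin n → Fin n → ℂ :=
  fun i j r s t =>
    f i j r s t + A i r s * kdelta j t
      + starRingEnd ℂ (B j r t) * kdelta i s
      + starRingEnd ℂ (B j s t) * kdelta i r
      + (1 / ((n : ℂ) - 2)) * (∑ l, starRingEnd ℂ (B l s l)) * kdelta j t * kdelta i r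

/-- The normalization conditions (i), (ii), (iii) on the pair `(A, B)`:
(i) `A` is trace-free, `Σ_i A^i_{is} = 0`;
(ii) the antisymmetric part of `A` is determined by the traces of `B`;
(iii) the tensor `P` is trace-free in both indicated pairs of indices. -/
def NormCond (n : ℕ) (f : Fin n → Fin n → Fin n → Fin n → Fin n → ℂ)
    (AB : (Fin n → Fin n → Fin n → ℂ) × (Fin n → Fin n → Fin n → ℂ)) : Prop :=
  (∀ s, ∑ i, AB.1 i i s = 0) ∧
  (∀ i r s, AB.1 i r s - AB.1 i s r =
    (1 / ((n : ℂ) - 2)) *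
      (starRingEnd ℂ (∑ l, AB.2 l r l) * kdelta i s -
       starRingEnd ℂ (∑ l, AB.2 l s l) * kdelta i r)) ∧
  (∀ i r s, ∑ j, Ptensor n f AB.1 AB.2 i j r s j = 0) ∧
  (∀ j s t, ∑ i, Ptensor n f AB.1 AB.2 i j i s t = 0)

/-!
Contracting `P` over `i = r` and using `Σ_i A^i_{is} = 0` gives
`(n+1)·conj(B^j_{st}) = -Σ_i f^{ij}_{ist} - n/(n-2)·β_s·δ^j_t`, where `β_s = Σ_l conj(B^l_{sl})`.
Contracting once more over `j = t` gives `κ·β_s = -G_s` for the double trace `G_s` of `f`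
and `κ = n + 1 + n²/(n-2) = (2n²-n-2)/(n-2) ≠ 0`, so `β`, then `B`, and then (from the
contraction over `j = t`) `A` are forced. Conversely these formulas satisfy all conditions; (ii)
holds because the contraction of `f` over `j = t` is symmetric in `r, s`. Finally,
`P^{ij}_{rst} - P^{ij}_{srt}` is `δ^j_t` times the defect of (ii), so `P` is symmetric.
-/

open Finset ComplexConjugate

section Normalization

variable {n : ℕ}

lemma sum_mul_kdelta (g : Fin n → ℂ) (s : Fin n) : ∑ i, g i * kdelta i s = g s := by
  simp [kdelta]

lemma sum_kdelta_self : ∑ i : Fin n, kdelta i i = n := by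
  simp [kdelta]

def traceLast (T : Fin n → Fin n → Fin n → Fin n → Fin n → ℂ) (i r s : Fin n) : ℂ :=
  ∑ j, T i j r s j

def traceFirst (T : Fin n → Fin n → Fin n → Fin n → Fin n → ℂ) (j s t : Fin n) : ℂ :=
  ∑ i, T i j i s t

def doubleTrace (T : Fin n → Fin n → Fin n → Fin n → Fin n → ℂ) (s : Fin n) : ℂ :=
  ∑ i, traceLast T i i s

lemma sum_traceFirst_diag (T : Fin n → Fin n → Fin n → Fin n → Fin n → ℂ) (s : Fin n) :
    ∑ t, traceFirst T t s t = doubleTrace T s :=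
  Finset.sum_comm

lemma traceLast_swap {f : Fin n → Fin n → Fin n → Fin n → Fin n → ℂ}
    (hf : ∀ i j r s t, f i j r s t = f i j s r t) (i r s : Fin n) :
    traceLast f i r s = traceLast f i s r :=
  Finset.sum_congr rfl fun j _ => hf i j r s j

def conjTrace (B : Fin n → Fin n → Fin n → ℂ) (s : Fin n) : ℂ :=
  ∑ l, conj (B l s l)

lemma conj_sum_eq_conjTrace (B : Fin n → Fin n → Fin n → ℂ) (s : Fin n) :
    conj (∑ l, B l s l) = conjTrace B s :=
  map_sum _ _ _

variable (f : Fin n → Fin n → Fin n → Fin n → Fin n → ℂ) (A B : Fin n → Fin n → Fin n → ℂ)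

lemma traceLast_Ptensor (i r s : Fin n) :
    traceLast (Ptensor n f A B) i r s =
      traceLast f i r s + n * A i r s + conjTrace B r * kdelta i s
        + (1 + n / (n - 2)) * conjTrace B s * kdelta i r := by
  simp only [traceLast, Ptensor, sum_add_distrib, ← sum_mul, ← mul_sum, sum_kdelta_self,
    conjTrace]
  ring

lemma traceFirst_Ptensor (j s t : Fin n) :
    traceFirst (Ptensor n f A B) j s t =
      traceFirst f j s t + (∑ i, A i i s) * kdelta j t + (n + 1) * conj (B j s t)
        + n / (n - 2) * conjTrace B s * kdelta j t := by
  simp only [traceFirst, Ptensor, sum_add_distrib, ← sum_mul, sum_mul_kdelta,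
    ← mul_sum, sum_kdelta_self, conjTrace]
  ring

lemma Ptensor_sub_Ptensor_swap (i j r s t : Fin n) :
    Ptensor n f A B i j r s t - Ptensor n f A B i j s r t =
      f i j r s t - f i j s r t + (A i r s - A i s r
        - 1 / ((n : ℂ) - 2) * (conjTrace B r * kdelta i s - conjTrace B s * kdelta i r))
        * kdelta j t := by
  simp only [Ptensor, conjTrace]
  ring

lemma Ptensor_swap_of_normCond {f : Fin n → Fin n → Fin n → Fin n → Fin n → ℂ}
    (hf : ∀ i j r s t, f i j r s t = f i j s r t)
    {AB : (Fin n → Fin n → Fin n → ℂ) × (Fin n → Fin n → Fin n → ℂ)} (h : NormCond n f AB)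
    (i j r s t : Fin n) :
    Ptensor n f AB.1 AB.2 i j r s t = Ptensor n f AB.1 AB.2 i j s r t := by
  have hii := h.2.1 i r s
  rw [conj_sum_eq_conjTrace, conj_sum_eq_conjTrace] at hii
  rw [← sub_eq_zero, Ptensor_sub_Ptensor_swap]
  linear_combination hf i j r s t + kdelta j t * hii

lemma conj_mul_eq_of_traceFirst_Ptensor_eq_zero {s : Fin n} (hA : ∑ i, A i i s = 0)
    {j t : Fin n} (h : traceFirst (Ptensor n f A B) j s t = 0) :
    (n + 1) * conj (B j s t) = -(traceFirst f j s t + n / (n - 2) * conjTrace B s * kdelta j t) := by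
  rw [traceFirst_Ptensor, hA] at h
  linear_combination h

def traceCoeff (n : ℕ) : ℂ := n + 1 + n ^ 2 / (n - 2)

def normalizingTrace (s : Fin n) : ℂ := -doubleTrace f s / traceCoeff n

def normalizingB (j s t : Fin n) : ℂ :=
  conj (-(traceFirst f j s t + n / (n - 2) * normalizingTrace f s * kdelta j t) / (n + 1))

def normalizingA (i r s : Fin n) : ℂ :=
  -(traceLast f i r s + normalizingTrace f r * kdelta i s
    + (1 + n / (n - 2)) * normalizingTrace f s * kdelta i r) / n

lemma natCast_sub_two_ne_zero (hn : 3 ≤ n) : (n : ℂ) - 2 ≠ 0 :=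
  sub_ne_zero.mpr (by exact_mod_cast (by omega : n ≠ 2))

lemma traceCoeff_ne_zero (hn : 3 ≤ n) : traceCoeff n ≠ 0 := by
  have h2 : (0 : ℝ) < n - 2 := by
    have : (3 : ℝ) ≤ n := by exact_mod_cast hn
    linarith
  have hpos : (0 : ℝ) < n + 1 + n ^ 2 / (n - 2) :=
    add_pos_of_pos_of_nonneg (by positivity) (div_nonneg (sq_nonneg _) h2.le)
  have hcast : traceCoeff n = ((n + 1 + n ^ 2 / (n - 2) : ℝ) : ℂ) := by
    simp [traceCoeff]
  rw [hcast]
  exact_mod_cast hpos.ne'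

lemma traceCoeff_mul_normalizingTrace (hn : 3 ≤ n) (s : Fin n) :
    traceCoeff n * normalizingTrace f s = -doubleTrace f s :=
  mul_div_cancel₀ _ (traceCoeff_ne_zero hn)

lemma conjTrace_normalizingB (hn : 3 ≤ n) (s : Fin n) :
    conjTrace (normalizingB f) s = normalizingTrace f s := by
  simp only [conjTrace, normalizingB, Complex.conj_conj, ← sum_div, sum_neg_distrib,
    sum_add_distrib, sum_traceFirst_diag, ← mul_sum, sum_kdelta_self]
  have hβ := traceCoeff_mul_normalizingTrace f hn s
  rw [traceCoeff] at hβ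
  rw [div_eq_iff (Nat.cast_add_one_ne_zero n)]
  linear_combination -hβ

lemma sum_normalizingA_diag (hn : 3 ≤ n) (s : Fin n) : ∑ i, normalizingA f i i s = 0 := by
  simp only [normalizingA, ← sum_div, sum_neg_distrib, sum_add_distrib, sum_mul_kdelta,
    ← mul_sum, sum_kdelta_self]
  have hβ := traceCoeff_mul_normalizingTrace f hn s
  rw [traceCoeff, doubleTrace] at hβ
  rw [neg_div, neg_eq_zero, div_eq_zero_iff]
  left
  linear_combination hβ

lemma normalizingA_sub_swap (hn : 3 ≤ n) (hf : ∀ i j r s t, f i j r s t = f i j s r t)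
    (i r s : Fin n) :
    normalizingA f i r s - normalizingA f i s r =
      1 / ((n : ℂ) - 2) *
        (conj (∑ l, normalizingB f l r l) * kdelta i s
          - conj (∑ l, normalizingB f l s l) * kdelta i r) := by
  rw [conj_sum_eq_conjTrace, conj_sum_eq_conjTrace, conjTrace_normalizingB f hn,
    conjTrace_normalizingB f hn, normalizingA, normalizingA, traceLast_swap hf i s r]
  field_simp [Nat.cast_ne_zero.mpr (by omega : n ≠ 0), natCast_sub_two_ne_zero hn]
  ring

lemma traceLast_Ptensor_normalizing (hn : 3 ≤ n) (i r s : Fin n) :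
    traceLast (Ptensor n f (normalizingA f) (normalizingB f)) i r s = 0 := by
  rw [traceLast_Ptensor, conjTrace_normalizingB f hn, conjTrace_normalizingB f hn, normalizingA,
    mul_div_cancel₀ _ (Nat.cast_ne_zero.mpr (by omega : n ≠ 0))]
  ring

lemma traceFirst_Ptensor_normalizing (hn : 3 ≤ n) (j s t : Fin n) :
    traceFirst (Ptensor n f (normalizingA f) (normalizingB f)) j s t = 0 := by
  rw [traceFirst_Ptensor, sum_normalizingA_diag f hn, conjTrace_normalizingB f hn, normalizingB,
    Complex.conj_conj, mul_div_cancel₀ _ (Nat.cast_add_one_ne_zero n)]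
  ring

lemma normCond_normalizing (hn : 3 ≤ n) (hf : ∀ i j r s t, f i j r s t = f i j s r t) :
    NormCond n f (normalizingA f, normalizingB f) :=
  ⟨sum_normalizingA_diag f hn, normalizingA_sub_swap f hn hf,
    traceLast_Ptensor_normalizing f hn, traceFirst_Ptensor_normalizing f hn⟩

variable {f} {AB : (Fin n → Fin n → Fin n → ℂ) × (Fin n → Fin n → Fin n → ℂ)}

lemma conjTrace_eq_normalizingTrace_of_normCond (hn : 3 ≤ n) (h : NormCond n f AB) (s : Fin n) :
    conjTrace AB.2 s = normalizingTrace f s := by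
  have hsum := sum_congr rfl fun t (_ : t ∈ univ) =>
    conj_mul_eq_of_traceFirst_Ptensor_eq_zero f AB.1 AB.2 (h.1 s) (h.2.2.2 t s t)
  simp only [← mul_sum, sum_neg_distrib, sum_add_distrib, sum_traceFirst_diag,
    sum_kdelta_self, conjTrace] at hsum
  rw [normalizingTrace, eq_div_iff (traceCoeff_ne_zero hn), traceCoeff, conjTrace]
  linear_combination hsum

lemma snd_eq_normalizingB_of_normCond (hn : 3 ≤ n) (h : NormCond n f AB) :
    AB.2 = normalizingB f := by
  funext j s t
  have hB := conj_mul_eq_of_traceFirst_Ptensor_eq_zero f AB.1 AB.2 (h.1 s) (h.2.2.2 j s t)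
  rw [conjTrace_eq_normalizingTrace_of_normCond hn h s] at hB
  rw [normalizingB, ← hB, mul_div_cancel_left₀ _ (Nat.cast_add_one_ne_zero n), Complex.conj_conj]

lemma fst_eq_normalizingA_of_normCond (hn : 3 ≤ n) (h : NormCond n f AB) :
    AB.1 = normalizingA f := by
  funext i r s
  have hA : traceLast (Ptensor n f AB.1 AB.2) i r s = 0 := h.2.2.1 i r s
  rw [traceLast_Ptensor, conjTrace_eq_normalizingTrace_of_normCond hn h r,
    conjTrace_eq_normalizingTrace_of_normCond hn h s] at hA
  rw [normalizingA, eq_div_iff (Nat.cast_ne_zero.mpr (by omega : n ≠ 0))]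
  linear_combination hA

lemma eq_normalizing_of_normCond (hn : 3 ≤ n) (h : NormCond n f AB) :
    AB = (normalizingA f, normalizingB f) :=
  Prod.ext (fst_eq_normalizingA_of_normCond hn h) (snd_eq_normalizingB_of_normCond hn h)

end Normalization

/-- for `n ≥ 3` and `f` symmetric in the indices `r, s`, there is
a unique pair `(A, B)` satisfying the normalization conditions, and for this
choice the resulting totally trace-free tensor `P` is symmetric in `r, s`. -/
theorem fundamental_invariant_normalization (n : ℕ) (hn : 3 ≤ n)
    (f : Fin n → Fin n → Fin n → Fin n → Fin n → ℂ)
    (hf : ∀ i j r s t, f i j r s t = f i j s r t) :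
    (∃! AB : (Fin n → Fin n → Fin n → ℂ) × (Fin n → Fin n → Fin n → ℂ),
      NormCond n f AB) ∧
    (∀ AB : (Fin n → Fin n → Fin n → ℂ) × (Fin n → Fin n → Fin n → ℂ),
      NormCond n f AB →
      ∀ i j r s t, Ptensor n f AB.1 AB.2 i j r s t = Ptensor n f AB.1 AB.2 i j s r t) :=
  ⟨⟨_, normCond_normalizing f hn hf, fun _ h => eq_normalizing_of_normCond hn h⟩,
    fun _ h => Ptensor_swap_of_normCond hf h⟩
end
end
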